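/- Let (ℱ, 𝒮) be a digraph-source sequence of size ℓ with ℱ = (G_1,...,G_ℓ), and let B ⊆ ⋃_i V(G_i). Then the maximum size of a set of D-paths with respect to (ℱ, 𝒮) and B equals the minimum order of a D-cut, i.e., equals min over B′ ⊆ B of (|B \ B′| + Σ_{i=1}^{ℓ} x_i(B′)), where x_i(B′) is the minimum size of an (S_i, B′)-separator in G_i. -/

import Mathlib

/-!
Glue disjoint copies of the digraphs `G i` to one new copy of `B`, joining the copy of each
`b ∈ B` in `G i` to the new vertex `b`. A set of D-paths is then the same thing as a set of
disjoint paths from the copies of the `S i` to the new copy of `B`, and a separator `Y` of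
that digraph yields a D-cut of order at most `|Y|`: put into `B'` the `b ∈ B` whose new copy
avoids `Y`, and into `X i` the vertices whose copy in `G i` lies in `Y`. So Menger's theorem
gives a set of D-paths as large as the minimum order of a D-cut. Conversely, each D-path can
be charged injectively either to its end in `B \ B'` or to a vertex of `X i` on it.
-/

/-- A (directed) path given as a nonempty list of pairwise-distinct vertices
with consecutive pairs being edges of the digraph `G`. -/
def IsPathList {V : Type*} (G : V → V → Prop) (p : List V) : Prop :=
  p ≠ [] ∧ p.Nodup ∧ p.Chain' G

/-- The first vertex of the list `p` belongs to `A`. -/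
def FirstIn {V : Type*} (p : List V) (A : Set V) : Prop := ∃ a ∈ A, p.head? = some a

/-- The last vertex of the list `p` belongs to `A`. -/
def LastIn {V : Type*} (p : List V) (A : Set V) : Prop := ∃ a ∈ A, p.getLast? = some a

/-- `X` is an `(A,B)`-separator in `G`: every path of `G` starting in `A` and
ending in `B` meets `X`. -/
def IsSeparator {V : Type*} (G : V → V → Prop) (A B X : Set V) : Prop :=
  ∀ p : List V, IsPathList G p → FirstIn p A → LastIn p B → ∃ v ∈ p, v ∈ X

/-- Two lists of vertices share no vertex. -/
def ListsDisjoint {V : Type*} (p q : List V) : Prop := ∀ v, v ∈ p → v ∉ q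

/-- An `(ℱ,𝒮)`-respecting system of paths, encoded as a finite set of pairs
`(i, p)` where `p` is a path of `G i` starting in `S i`, and paths assigned to
the same index (i.e. in the same part of the defining partition) are pairwise
vertex-disjoint. -/
def RespectingSys {V : Type*} {ℓ : ℕ} (G : Fin ℓ → V → V → Prop) (S : Fin ℓ → Set V)
    (P : Finset (Fin ℓ × List V)) : Prop :=
  (∀ q ∈ P, IsPathList (G q.1) q.2 ∧ FirstIn q.2 (S q.1)) ∧
  (∀ q ∈ P, ∀ q' ∈ P, q ≠ q' → q.1 = q'.1 → ListsDisjoint q.2 q'.2)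

/-- A set of D-paths w.r.t. `(ℱ,𝒮)` and `B` : a respecting system whose paths
have pairwise distinct last vertices, all lying in `B`. -/
def DPathSys {V : Type*} {ℓ : ℕ} (G : Fin ℓ → V → V → Prop) (S : Fin ℓ → Set V)
    (B : Set V) (P : Finset (Fin ℓ × List V)) : Prop :=
  RespectingSys G S P ∧ (∀ q ∈ P, LastIn q.2 B) ∧
  (∀ q ∈ P, ∀ q' ∈ P, q ≠ q' → q.2.getLast? ≠ q'.2.getLast?)

section Paths

variable {V : Type*} {R R' : V → V → Prop} {A B X : Set V} {p q : List V}

lemma List.exists_eq_append_cons_append_cons_of_not_nodup (h : ¬ p.Nodup) :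
    ∃ (l₁ : List V) (a : V) (l₂ l₃ : List V), p = l₁ ++ a :: (l₂ ++ a :: l₃) := by
  induction p with
  | nil => simp at h
  | cons a t ih =>
    by_cases ha : a ∈ t
    · obtain ⟨s, r, rfl⟩ := List.append_of_mem ha
      exact ⟨[], a, s, r, by simp⟩
    · obtain ⟨l₁, b, l₂, l₃, rfl⟩ := ih fun hn => h (List.nodup_cons.2 ⟨ha, hn⟩)
      exact ⟨a :: l₁, b, l₂, l₃, by simp⟩

lemma List.head?_append_cons (l₁ : List V) (a : V) (l₂ : List V) :
    (l₁ ++ a :: l₂).head? = (l₁ ++ [a]).head? := by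
  cases l₁ <;> simp

lemma List.eq_of_getLast?_eq_some_of_mem {l₁ l₂ : List V} {a x : V}
    (hp : (l₁ ++ a :: l₂).Nodup) (hx : (l₁ ++ a :: l₂).getLast? = some x)
    (hmem : x ∈ l₁ ++ [a]) : x = a := by
  rcases List.eq_nil_or_concat l₂ with rfl | ⟨l, b, rfl⟩
  · simpa using hx.symm
  · simp only [List.concat_eq_append] at hp hx
    have hxb : x = b := by
      rw [List.getLast?_append_cons, ← List.cons_append, List.getLast?_concat] at hx
      exact (Option.some.inj hx).symm
    subst hxb
    have := List.nodup_append.1 (show ((l₁ ++ [a]) ++ (l ++ [x])).Nodup by simpa using hp)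
    exact absurd rfl (this.2.2 x hmem x (by simp))

lemma List.eq_of_head?_eq_some_of_mem {l₁ l₂ : List V} {a x : V}
    (hp : (l₁ ++ a :: l₂).Nodup) (hx : (l₁ ++ a :: l₂).head? = some x)
    (hmem : x ∈ a :: l₂) : x = a := by
  cases l₁ with
  | nil => simpa using hx.symm
  | cons b l =>
    have hxb : x = b := by simpa using hx.symm
    subst hxb
    exact absurd rfl (List.nodup_append.1 hp |>.2.2 x (by simp) x hmem)

lemma List.IsChain.isChain_or_exists_split {u v : V}
    (hR : ∀ a b, R a b → R' a b ∨ (a = u ∧ b = v)) :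
    ∀ {p : List V}, p.IsChain R →
      p.IsChain R' ∨ ∃ l₁ l₂, p = l₁ ++ u :: v :: l₂ ∧ (l₁ ++ [u]).IsChain R'
  | [], _ => .inl .nil
  | [_], _ => .inl (.singleton _)
  | a :: b :: t, hc => by
    rw [List.isChain_cons_cons] at hc
    rcases hR a b hc.1 with hab | ⟨rfl, rfl⟩
    · rcases isChain_or_exists_split hR hc.2 with ht | ⟨l₁, l₂, ht, hpre⟩
      · exact .inl (.cons_cons hab ht)
      · right
        refine ⟨a :: l₁, l₂, by simp [ht], ?_⟩
        cases l₁ with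
        | nil => simp_all
        | cons c l =>
          simp only [List.cons_append] at ht hpre ⊢
          obtain ⟨rfl, -⟩ := List.cons.inj ht
          exact .cons_cons hab hpre
    · exact .inr ⟨[], t, rfl, .singleton _⟩

namespace IsPathList

lemma mono (h : ∀ a b, R a b → R' a b) (hp : IsPathList R p) : IsPathList R' p :=
  ⟨hp.1, hp.2.1, hp.2.2.imp (h · ·)⟩

lemma reverse (hp : IsPathList R p) : IsPathList (flip R) p.reverse :=
  ⟨by simpa using hp.1, List.nodup_reverse.2 hp.2.1, List.isChain_reverse.2 hp.2.2⟩

lemma prefix_of_append_cons {l₁ l₂ : List V} {a : V} (hp : IsPathList R (l₁ ++ a :: l₂)) :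
    IsPathList R (l₁ ++ [a]) := by
  have hpre : (l₁ ++ [a]) <+: (l₁ ++ a :: l₂) := ⟨l₂, by simp⟩
  exact ⟨by simp, hp.2.1.sublist hpre.sublist, hp.2.2.prefix hpre⟩

lemma append (hp : IsPathList R p) (hq : q.Nodup) (hqc : q.IsChain R)
    (hpq : ListsDisjoint p q) (hlink : ∀ x ∈ p.getLast?, ∀ y ∈ q.head?, R x y) :
    IsPathList R (p ++ q) :=
  ⟨by simp [hp.1], hp.2.1.append hq fun _ ha hb => hpq _ ha hb,
    List.isChain_append.2 ⟨hp.2.2, hqc, hlink⟩⟩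

lemma cons {u : V} (hp : IsPathList R p) (hu : u ∉ p) (h : ∀ y ∈ p.head?, R u y) :
    IsPathList R (u :: p) :=
  ⟨List.cons_ne_nil _ _, List.nodup_cons.2 ⟨hu, hp.2.1⟩, List.isChain_cons.2 ⟨h, hp.2.2⟩⟩

lemma append_tail (hp : IsPathList R p) (hq : IsPathList R q) {t : V}
    (hpt : p.getLast? = some t) (hqt : q.head? = some t) (hpq : ∀ w ∈ p, w ∈ q → w = t) :
    IsPathList R (p ++ q.tail) := by
  have hcons : q = t :: q.tail := List.eq_cons_of_mem_head? hqt
  have hnd := hq.2.1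
  have hch : q.IsChain R := hq.2.2
  rw [hcons, List.nodup_cons] at hnd
  rw [hcons, List.isChain_cons] at hch
  refine hp.append hnd.2 hch.2 (fun w hwp hwq => hnd.1 ?_) ?_
  · rwa [← hpq w hwp (List.mem_of_mem_tail hwq)]
  · simp only [hpt, Option.mem_def, Option.some.injEq]
    rintro _ rfl
    exact hch.1

lemma eq_singleton (hp : IsPathList R p) (hR : ∀ a b, R a b → a = b) : ∃ x, p = [x] := by
  match p, hp with
  | [x], _ => exact ⟨x, rfl⟩
  | x :: y :: t, hp =>
    have hxy := hR x y (List.isChain_cons_cons.1 hp.2.2).1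
    exact absurd (hxy ▸ hp.2.1) (by simp)

end IsPathList

lemma exists_isPathList_of_isChain (hne : p ≠ []) (hc : p.IsChain R) :
    ∃ q, IsPathList R q ∧ q.head? = p.head? ∧ q.getLast? = p.getLast? ∧ q ⊆ p := by
  induction hn : p.length using Nat.strong_induction_on generalizing p with
  | _ n ih =>
  by_cases hd : p.Nodup
  · exact ⟨p, ⟨hne, hd, hc⟩, rfl, rfl, List.Subset.refl p⟩
  obtain ⟨l₁, a, l₂, l₃, rfl⟩ := List.exists_eq_append_cons_append_cons_of_not_nodup hd
  -- shortcut the closed walk between the two occurrences of `a`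
  have hc' : (l₁ ++ a :: l₃).IsChain R := by
    have h₁ : (l₁ ++ [a]).IsChain R := hc.prefix ⟨l₂ ++ a :: l₃, by simp⟩
    have h₂ : (a :: l₃).IsChain R := hc.suffix ⟨l₁ ++ a :: l₂, by simp⟩
    rw [show l₁ ++ a :: l₃ = (l₁ ++ [a]) ++ l₃ by simp, List.isChain_append]
    exact ⟨h₁, h₂.tail, by simpa using (List.isChain_cons.1 h₂).1⟩
  obtain ⟨q, hq, hh, hl, hsub⟩ := ih _ (by simp [← hn]) (by simp) hc' rfl
  refine ⟨q, hq, ?_, ?_, fun x hx => ?_⟩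
  · simp [hh, List.head?_append]
  · rw [hl, List.getLast?_append_cons, List.getLast?_append_cons, ← List.cons_append,
      List.getLast?_append_cons]
  · have := hsub hx
    simp only [List.mem_append, List.mem_cons] at this ⊢
    tauto

lemma isSeparator_flip : IsSeparator (flip R) B A X ↔ IsSeparator R A B X := by
  suffices ∀ {R : V → V → Prop} {A B}, IsSeparator R A B X → IsSeparator (flip R) B A X from
    ⟨this, this⟩
  intro R A B hX p hp hB hA
  obtain ⟨x, hx, hxX⟩ := hX p.reverse hp.reverse
    (by simpa [FirstIn, LastIn] using hA) (by simpa [FirstIn, LastIn] using hB)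
  exact ⟨x, List.mem_reverse.1 hx, hxX⟩

end Paths

lemma List.getLast?_append_tail {V : Type*} {l₁ l₂ : List V} (h : l₁.getLast? = l₂.head?) :
    (l₁ ++ l₂.tail).getLast? = l₂.getLast? := by
  rcases l₂ with _ | ⟨a, _ | ⟨b, t⟩⟩
  · simp_all
  · simpa using h
  · rw [List.tail_cons, List.getLast?_append_of_ne_nil _ (List.cons_ne_nil b t),
      List.getLast?_cons_cons]

section Menger

variable {V : Type*} {R R' : V → V → Prop} {A B X Y : Set V} {p q : List V}

def DisjointPaths (R : V → V → Prop) (A B : Set V) (P : Finset (List V)) : Prop :=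
  (∀ p ∈ P, IsPathList R p ∧ FirstIn p A ∧ LastIn p B) ∧ (P : Set (List V)).Pairwise ListsDisjoint

lemma DisjointPaths.mono (h : ∀ a b, R a b → R' a b) {P : Finset (List V)}
    (hP : DisjointPaths R A B P) : DisjointPaths R' A B P :=
  ⟨fun p hp => ⟨(hP.1 p hp).1.mono h, (hP.1 p hp).2⟩, hP.2⟩

lemma exists_disjointPaths_of_forall_eq [Finite V] (hR : ∀ a b, R a b → a = b) {k : ℕ}
    (h : ∀ X, IsSeparator R A B X → k ≤ X.ncard) :
    ∃ P, DisjointPaths R A B P ∧ P.card = k := by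
  classical
  have hAB : IsSeparator R A B (A ∩ B) := by
    rintro p hp ⟨a, ha, hpa⟩ ⟨b, hb, hpb⟩
    obtain ⟨x, rfl⟩ := hp.eq_singleton hR
    simp only [List.head?_cons, List.getLast?_singleton, Option.some.injEq] at hpa hpb
    exact ⟨x, List.mem_singleton_self x, hpa ▸ ha, hpb ▸ hb⟩
  obtain ⟨t, htAB, htk⟩ := Set.exists_subset_card_eq (h _ hAB)
  refine ⟨t.toFinite.toFinset.image ([·]), ⟨?_, ?_⟩, ?_⟩
  · simp only [Finset.mem_image, Set.Finite.mem_toFinset]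
    rintro _ ⟨x, hx, rfl⟩
    exact ⟨⟨by simp, by simp, .singleton x⟩, ⟨x, (htAB hx).1, rfl⟩, ⟨x, (htAB hx).2, rfl⟩⟩
  · simp only [Finset.coe_image, Set.Finite.coe_toFinset]
    rintro _ ⟨x, -, rfl⟩ _ ⟨y, -, rfl⟩ hxy w hwx hwy
    simp_all
  · rw [Finset.card_image_of_injective _ List.singleton_injective,
      ← Set.ncard_eq_toFinset_card _ t.toFinite, htk]

section Endpoint

variable [Finite V] {P : Finset (List V)} {f : List V → Option V} {T : Set V}

/-- `f` is `List.head?` or `List.getLast?`. -/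
lemma exists_mem_eq_some_of_ncard_le (hP : (P : Set (List V)).Pairwise ListsDisjoint)
    (hf : ∀ p x, f p = some x → x ∈ p) (hT : ∀ p ∈ P, ∃ x ∈ T, f p = some x)
    (hcard : T.ncard ≤ P.card) {x : V} (hx : x ∈ T) : ∃ p ∈ P, f p = some x := by
  classical
  have hsub : f '' P ⊆ some '' T := by
    rintro _ ⟨p, hp, rfl⟩
    obtain ⟨y, hy, hpy⟩ := hT p hp
    exact ⟨y, hy, hpy.symm⟩
  have hinj : Set.InjOn f P := by
    intro p hp p' hp' hpp'
    by_contra hne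
    obtain ⟨y, -, hpy⟩ := hT p hp
    exact hP hp hp' hne y (hf p y hpy) (hf p' y (hpp' ▸ hpy))
  have heq := Set.eq_of_subset_of_ncard_le hsub (by
    rw [Set.ncard_image_of_injective _ (Option.some_injective V), hinj.ncard_image,
      Set.ncard_coe_finset]
    exact hcard)
  obtain ⟨p, hp, hpx⟩ : some x ∈ f '' P := heq ▸ ⟨x, hx, rfl⟩
  exact ⟨p, hp, hpx⟩

lemma eq_some_of_mem_of_ncard_le (hP : (P : Set (List V)).Pairwise ListsDisjoint)
    (hf : ∀ p x, f p = some x → x ∈ p) (hT : ∀ p ∈ P, ∃ x ∈ T, f p = some x)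
    (hcard : T.ncard ≤ P.card) (hp : p ∈ P) {x : V} (hxp : x ∈ p) (hx : x ∈ T) :
    f p = some x := by
  obtain ⟨q, hq, hqx⟩ := exists_mem_eq_some_of_ncard_le hP hf hT hcard hx
  by_contra hne
  exact hP hp hq (fun h => hne (h ▸ hqx)) x hxp (hf q x hqx)

end Endpoint

lemma IsSeparator.getLast?_eq_and_head?_eq (hX : IsSeparator R A B X)
    (hp : IsPathList R p) (hpA : FirstIn p A) (hpX : ∀ x ∈ p, x ∈ X → p.getLast? = some x)
    (hq : IsPathList R q) (hqB : LastIn q B) (hqX : ∀ x ∈ q, x ∈ X → q.head? = some x)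
    {w : V} (hwp : w ∈ p) (hwq : w ∈ q) : p.getLast? = some w ∧ q.head? = some w := by
  obtain ⟨l₁, l₂, rfl⟩ := List.append_of_mem hwp
  obtain ⟨m₁, m₂, rfl⟩ := List.append_of_mem hwq
  -- follow `p` up to `w`, then `q` from `w` on: this walk from `A` to `B` must meet `X`
  have hc : (l₁ ++ w :: m₂).IsChain R := by
    rw [show l₁ ++ w :: m₂ = (l₁ ++ [w]) ++ m₂ by simp, List.isChain_append]
    have h₂ : (w :: m₂).IsChain R := hq.2.2.suffix ⟨m₁, rfl⟩
    exact ⟨hp.2.2.prefix ⟨l₂, by simp⟩, h₂.tail, by simpa using (List.isChain_cons.1 h₂).1⟩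
  obtain ⟨r, hr, hrh, hrl, hsub⟩ := exists_isPathList_of_isChain (by simp) hc
  obtain ⟨a, ha, hpa⟩ := hpA
  obtain ⟨b, hb, hqb⟩ := hqB
  obtain ⟨x, hxr, hxX⟩ := hX r hr ⟨a, ha, by rw [hrh, List.head?_append_cons,
    ← List.head?_append_cons l₁ w l₂, hpa]⟩ ⟨b, hb, by rw [hrl, List.getLast?_append_cons,
    ← List.getLast?_append_cons m₁ w m₂, hqb]⟩
  have hx : x ∈ l₁ ++ [w] ∨ x ∈ w :: m₂ := by
    have := hsub hxr
    simp only [List.mem_append, List.mem_cons] at this ⊢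
    tauto
  rcases hx with hx | hx
  · have hpx := hpX x (List.IsPrefix.subset ⟨l₂, by simp⟩ hx) hxX
    obtain rfl := List.eq_of_getLast?_eq_some_of_mem hp.2.1 hpx hx
    exact ⟨hpx, hqX x hwq hxX⟩
  · have hqx := hqX x (List.mem_append_right _ hx) hxX
    obtain rfl := List.eq_of_head?_eq_some_of_mem hq.2.1 hqx (by simpa using hx)
    exact ⟨hpX x hwp hxX, hqx⟩

lemma exists_disjointPaths_of_join [Finite V] (T : Set V) (f g : V → List V)
    (hf : ∀ t ∈ T, IsPathList R (f t) ∧ FirstIn (f t) A ∧ (f t).getLast? = some t)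
    (hg : ∀ t ∈ T, IsPathList R (g t) ∧ (g t).head? = some t ∧ LastIn (g t) B)
    (hff : T.Pairwise fun s t => ListsDisjoint (f s) (f t))
    (hgg : T.Pairwise fun s t => ListsDisjoint (g s) (g t))
    (hfg : ∀ s ∈ T, ∀ t ∈ T, ∀ w ∈ f s, w ∈ g t → s = w ∧ t = w) :
    ∃ P, DisjointPaths R A B P ∧ P.card = T.ncard := by
  classical
  set join : V → List V := fun t => f t ++ (g t).tail
  have hjoin : ∀ t ∈ T, IsPathList R (join t) ∧ FirstIn (join t) A ∧ LastIn (join t) B := by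
    intro t ht
    obtain ⟨hpf, ⟨a, ha, hfa⟩, hft⟩ := hf t ht
    obtain ⟨hpg, hgt, ⟨b, hb, hgb⟩⟩ := hg t ht
    refine ⟨hpf.append_tail hpg hft hgt fun w hwf hwg => (hfg t ht t ht w hwf hwg).2.symm,
      ⟨a, ha, ?_⟩, ⟨b, hb, ?_⟩⟩
    · rw [List.head?_append_of_ne_nil _ hpf.1, hfa]
    · rw [List.getLast?_append_tail (hft.trans hgt.symm), hgb]
  have hdisj : T.Pairwise fun s t => ListsDisjoint (join s) (join t) := by
    intro s hs t ht hst w hws hwt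
    simp only [join, List.mem_append] at hws hwt
    rcases hws with hws | hws <;> rcases hwt with hwt | hwt
    · exact hff hs ht hst w hws hwt
    · obtain ⟨rfl, rfl⟩ := hfg s hs t ht w hws (List.mem_of_mem_tail hwt)
      exact hst rfl
    · obtain ⟨rfl, rfl⟩ := hfg t ht s hs w hwt (List.mem_of_mem_tail hws)
      exact hst rfl
    · exact hgg hs ht hst w (List.mem_of_mem_tail hws) (List.mem_of_mem_tail hwt)
  have hinj : Set.InjOn join T := by
    intro s hs t ht hst
    by_contra hne
    obtain ⟨w, hw⟩ := List.exists_mem_of_ne_nil _ (hjoin s hs).1.1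
    exact hdisj hs ht hne w hw (hst ▸ hw)
  refine ⟨T.toFinite.toFinset.image join, ⟨?_, ?_⟩, ?_⟩
  · simp only [Finset.mem_image, Set.Finite.mem_toFinset]
    rintro _ ⟨t, ht, rfl⟩
    exact hjoin t ht
  · simp only [Finset.coe_image, Set.Finite.coe_toFinset]
    rintro _ ⟨s, hs, rfl⟩ _ ⟨t, ht, rfl⟩ hst
    exact hdisj hs ht fun h => hst (h ▸ rfl)
  · rw [Finset.card_image_of_injOn (by simpa using hinj), ← Set.ncard_eq_toFinset_card]

end Menger

section Split

variable {V : Type*} {R R' : V → V → Prop} {A B X Y : Set V} {u v : V}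

lemma IsSeparator.insert_of_split (hR : ∀ a b, R a b → R' a b ∨ (a = u ∧ b = v))
    (hX : IsSeparator R' A B X) {w : V} (hw : w = u ∨ w = v) :
    IsSeparator R A B (insert w X) := by
  intro p hp hpA hpB
  rcases hp.2.2.isChain_or_exists_split hR with hc | ⟨l₁, l₂, rfl, -⟩
  · obtain ⟨x, hx, hxX⟩ := hX p ⟨hp.1, hp.2.1, hc⟩ hpA hpB
    exact ⟨x, hx, Set.mem_insert_of_mem _ hxX⟩
  · exact ⟨w, by rcases hw with rfl | rfl <;> simp, Set.mem_insert _ _⟩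

lemma IsSeparator.of_isSeparator_insert_left (hR : ∀ a b, R a b → R' a b ∨ (a = u ∧ b = v))
    (hX : IsSeparator R' A B X) (hY : IsSeparator R' A (insert u X) Y) :
    IsSeparator R A B Y := by
  intro p hp ⟨a, ha, hpa⟩ hpB
  -- the segment of `p` up to its first vertex in `insert u X` avoids the edge `u → v`
  suffices ∃ l₁ x l₂, p = l₁ ++ x :: l₂ ∧ x ∈ insert u X ∧ (l₁ ++ [x]).IsChain R' by
    obtain ⟨l₁, x, l₂, rfl, hx, hc⟩ := this
    obtain ⟨y, hy, hyY⟩ := hY (l₁ ++ [x]) ⟨by simp, hp.prefix_of_append_cons.2.1, hc⟩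
      ⟨a, ha, by rwa [← List.head?_append_cons l₁ x l₂]⟩ ⟨x, hx, by simp⟩
    exact ⟨y, List.IsPrefix.subset ⟨l₂, by simp⟩ hy, hyY⟩
  rcases hp.2.2.isChain_or_exists_split hR with hc | ⟨l₁, l₂, rfl, hc⟩
  · obtain ⟨x, hx, hxX⟩ := hX p ⟨hp.1, hp.2.1, hc⟩ ⟨a, ha, hpa⟩ hpB
    obtain ⟨l₁, l₂, rfl⟩ := List.append_of_mem hx
    exact ⟨l₁, x, l₂, rfl, Set.mem_insert_of_mem _ hxX, hc.prefix ⟨l₂, by simp⟩⟩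
  · exact ⟨l₁, u, v :: l₂, rfl, Set.mem_insert _ _, hc⟩

lemma IsSeparator.of_isSeparator_insert_right (hR : ∀ a b, R a b → R' a b ∨ (a = u ∧ b = v))
    (hX : IsSeparator R' A B X) (hY : IsSeparator R' (insert v X) B Y) :
    IsSeparator R A B Y :=
  isSeparator_flip.1 <| IsSeparator.of_isSeparator_insert_left (R := flip R) (R' := flip R')
    (fun a b h => (hR b a h).imp id And.symm) (isSeparator_flip.2 hX) (isSeparator_flip.2 hY)

end Split

section JoinEdge

variable {V : Type*} [DecidableEq V] {R : V → V → Prop} {A B X : Set V} {u v : V}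
  {fB : V → List V}

lemma isPathList_update_cons (huv : R u v)
    (hfB : ∀ x ∈ insert v X, IsPathList R (fB x) ∧ (fB x).head? = some x ∧ LastIn (fB x) B)
    (hu : ∀ t ∈ insert v X, u ∉ fB t) {t : V} (ht : t ∈ insert u X) :
    IsPathList R (Function.update fB u (u :: fB v) t) ∧
      (Function.update fB u (u :: fB v) t).head? = some t ∧
      LastIn (Function.update fB u (u :: fB v) t) B := by
  rcases eq_or_ne t u with rfl | htu
  · obtain ⟨hp, hpv, b, hb, hpb⟩ := hfB v (Set.mem_insert _ _)
    rw [Function.update_self]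
    refine ⟨hp.cons (hu v (Set.mem_insert _ _)) ?_, rfl, b, hb, ?_⟩
    · simp only [hpv, Option.mem_def, Option.some.injEq]
      rintro _ rfl
      exact huv
    · simp only [List.getLast?_cons, hpb, Option.getD_some]
  · rw [Function.update_of_ne htu]
    exact hfB t (Set.mem_insert_of_mem _ ((Set.mem_insert_iff.1 ht).resolve_left htu))

lemma pairwise_listsDisjoint_update_cons (hv : v ∉ X)
    (hBB : (insert v X).Pairwise fun s t => ListsDisjoint (fB s) (fB t))
    (hu : ∀ t ∈ insert v X, u ∉ fB t) :
    (insert u X).Pairwise fun s t =>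
      ListsDisjoint (Function.update fB u (u :: fB v) s) (Function.update fB u (u :: fB v) t) := by
  have hcross : ∀ t ∈ X, ListsDisjoint (u :: fB v) (fB t) := by
    intro t htX w hw hwt
    rcases List.mem_cons.1 hw with rfl | hw
    · exact hu t (Set.mem_insert_of_mem _ htX) hwt
    · exact hBB (Set.mem_insert _ _) (Set.mem_insert_of_mem _ htX) (fun h => hv (h ▸ htX)) w hw
        hwt
  intro s hs t ht hst
  rcases eq_or_ne s u with hsu | hsu <;> rcases eq_or_ne t u with htu | htu
  · exact absurd (hsu.trans htu.symm) hst
  · rw [hsu, Function.update_self, Function.update_of_ne htu]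
    exact hcross t ((Set.mem_insert_iff.1 ht).resolve_left htu)
  · rw [htu, Function.update_self, Function.update_of_ne hsu]
    exact fun w hws hwt => hcross s ((Set.mem_insert_iff.1 hs).resolve_left hsu) w hwt hws
  · rw [Function.update_of_ne hsu, Function.update_of_ne htu]
    exact hBB (Set.mem_insert_of_mem _ ((Set.mem_insert_iff.1 hs).resolve_left hsu))
      (Set.mem_insert_of_mem _ ((Set.mem_insert_iff.1 ht).resolve_left htu)) hst

end JoinEdge

lemma exists_disjointPaths_of_join_edge {V : Type*} [Finite V] {R : V → V → Prop}
    {A B X : Set V} {u v : V} (huv : R u v) (hne : u ≠ v) (hu : u ∉ X) (hv : v ∉ X)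
    (fA fB : V → List V)
    (hfA : ∀ x ∈ insert u X, IsPathList R (fA x) ∧ FirstIn (fA x) A ∧ (fA x).getLast? = some x)
    (hfB : ∀ x ∈ insert v X, IsPathList R (fB x) ∧ (fB x).head? = some x ∧ LastIn (fB x) B)
    (hAA : (insert u X).Pairwise fun s t => ListsDisjoint (fA s) (fA t))
    (hBB : (insert v X).Pairwise fun s t => ListsDisjoint (fB s) (fB t))
    (hAB : ∀ s ∈ insert u X, ∀ t ∈ insert v X, ∀ w ∈ fA s, w ∈ fB t → s = w ∧ t = w) :
    ∃ P, DisjointPaths R A B P ∧ P.card = (insert u X).ncard := by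
  classical
  have hu_not : ∀ t ∈ insert v X, u ∉ fB t := fun t ht h => by
    obtain ⟨-, rfl⟩ := hAB u (Set.mem_insert _ _) t ht u
      (List.mem_of_mem_getLast? (hfA u (Set.mem_insert _ _)).2.2) h
    simp [hne, hu] at ht
  -- the path ending in `u` is continued along `u → v` by the path starting in `v`
  refine exists_disjointPaths_of_join _ fA (Function.update fB u (u :: fB v)) hfA
    (fun t ht => isPathList_update_cons huv hfB hu_not ht) hAA
    (pairwise_listsDisjoint_update_cons hv hBB hu_not) fun s hs t ht w hws hwt => ?_
  rcases eq_or_ne t u with rfl | htu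
  · rw [Function.update_self, List.mem_cons] at hwt
    rcases hwt with rfl | hwt
    · exact ⟨by_contra fun h => hAA hs ht h w hws (List.mem_of_mem_getLast? (hfA w ht).2.2), rfl⟩
    · obtain ⟨rfl, rfl⟩ := hAB s hs v (Set.mem_insert _ _) w hws hwt
      simp [hne.symm, hv] at hs
  · rw [Function.update_of_ne htu] at hwt
    exact hAB s hs t (Set.mem_insert_of_mem _ ((Set.mem_insert_iff.1 ht).resolve_left htu)) w
      hws hwt

lemma exists_disjointPaths_of_split {V : Type*} [Finite V] {R R' : V → V → Prop} {A B X : Set V}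
    {u v : V} (hR' : ∀ a b, R' a b → R a b) (huv : R u v) (hne : u ≠ v) (hu : u ∉ X)
    (hv : v ∉ X) (hX : IsSeparator R' A B X) {PA PB : Finset (List V)}
    (hPA : DisjointPaths R' A (insert u X) PA) (hPAc : (insert u X).ncard ≤ PA.card)
    (hPB : DisjointPaths R' (insert v X) B PB) (hPBc : (insert v X).ncard ≤ PB.card) :
    ∃ P, DisjointPaths R A B P ∧ P.card = (insert u X).ncard := by
  have hlast : ∀ (p : List V) x, p.getLast? = some x → x ∈ p :=
    fun _ _ h => List.mem_of_mem_getLast? h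
  have hhead : ∀ (p : List V) x, p.head? = some x → x ∈ p := fun _ _ h => List.mem_of_mem_head? h
  have hAend : ∀ p ∈ PA, ∃ x ∈ insert u X, p.getLast? = some x := fun p hp => (hPA.1 p hp).2.2
  have hBend : ∀ p ∈ PB, ∃ x ∈ insert v X, p.head? = some x := fun p hp => (hPB.1 p hp).2.1
  choose! fA hfA hfAx using fun x (hx : x ∈ insert u X) =>
    exists_mem_eq_some_of_ncard_le hPA.2 hlast hAend hPAc hx
  choose! fB hfB hfBx using fun x (hx : x ∈ insert v X) =>
    exists_mem_eq_some_of_ncard_le hPB.2 hhead hBend hPBc hx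
  refine exists_disjointPaths_of_join_edge huv hne hu hv fA fB
    (fun x hx => ⟨(hPA.1 _ (hfA x hx)).1.mono hR', (hPA.1 _ (hfA x hx)).2.1, hfAx x hx⟩)
    (fun x hx => ⟨(hPB.1 _ (hfB x hx)).1.mono hR', hfBx x hx, (hPB.1 _ (hfB x hx)).2.2⟩)
    (fun s hs t ht hst => hPA.2 (hfA s hs) (hfA t ht) fun h =>
      hst (Option.some.inj ((hfAx s hs).symm.trans (h ▸ hfAx t ht))))
    (fun s hs t ht hst => hPB.2 (hfB s hs) (hfB t ht) fun h =>
      hst (Option.some.inj ((hfBx s hs).symm.trans (h ▸ hfBx t ht))))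
    fun s hs t ht w hws hwt => ?_
  have hAmeet : ∀ x ∈ fA s, x ∈ X → (fA s).getLast? = some x := fun x hxp hx =>
    eq_some_of_mem_of_ncard_le hPA.2 hlast hAend hPAc (hfA s hs) hxp (Set.mem_insert_of_mem _ hx)
  have hBmeet : ∀ x ∈ fB t, x ∈ X → (fB t).head? = some x := fun x hxp hx =>
    eq_some_of_mem_of_ncard_le hPB.2 hhead hBend hPBc (hfB t ht) hxp (Set.mem_insert_of_mem _ hx)
  have := hX.getLast?_eq_and_head?_eq (hPA.1 _ (hfA s hs)).1 (hPA.1 _ (hfA s hs)).2.1 hAmeet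
    (hPB.1 _ (hfB t ht)).1 (hPB.1 _ (hfB t ht)).2.2 hBmeet hws hwt
  rw [hfAx s hs, hfBx t ht] at this
  exact ⟨Option.some.inj this.1, Option.some.inj this.2⟩

/-- Menger's theorem. The proof is Diestel's first one: delete an edge `u → v`; if that
creates a separator `X` smaller than `k`, then `X ∪ {u}` and `X ∪ {v}` are separators of
size `k`, and `k` disjoint paths from `A` to `X ∪ {u}` and from `X ∪ {v}` to `B` (found by
induction) combine through the edge `u → v`. -/
theorem exists_disjointPaths_of_le_ncard {V : Type*} [Finite V] (R : V → V → Prop)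
    (A B : Set V) (k : ℕ) (h : ∀ X, IsSeparator R A B X → k ≤ X.ncard) :
    ∃ P, DisjointPaths R A B P ∧ P.card = k := by
  induction hn : {e : V × V | R e.1 e.2}.ncard using Nat.strong_induction_on
    generalizing R A B k with
  | _ n ih =>
  by_cases hloop : ∀ a b, R a b → a = b
  · exact exists_disjointPaths_of_forall_eq hloop h
  push Not at hloop
  obtain ⟨u, v, huv, hne⟩ := hloop
  set R' : V → V → Prop := fun a b => R a b ∧ ¬(a = u ∧ b = v)
  have hR' : ∀ a b, R' a b → R a b := fun _ _ h => h.1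
  have hR : ∀ a b, R a b → R' a b ∨ (a = u ∧ b = v) :=
    fun a b h => (em (a = u ∧ b = v)).symm.imp (⟨h, ·⟩) id
  have hlt : {e : V × V | R' e.1 e.2}.ncard < n := by
    rw [← hn, show {e : V × V | R' e.1 e.2} = {e | R e.1 e.2} \ {(u, v)} by
      ext; simp [R', Prod.ext_iff]]
    exact Set.ncard_sdiff_singleton_lt_of_mem huv
  have ih' := fun A B k h => ih _ hlt R' A B k h rfl
  by_cases hsep : ∀ X, IsSeparator R' A B X → k ≤ X.ncard
  · obtain ⟨P, hP, hk⟩ := ih' A B k hsep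
    exact ⟨P, hP.mono hR', hk⟩
  push Not at hsep
  obtain ⟨X, hX, hXk⟩ := hsep
  have hins : ∀ w, w = u ∨ w = v → w ∉ X ∧ (insert w X).ncard = k := by
    intro w hw
    have hk := h _ (hX.insert_of_split hR hw)
    have hwX : w ∉ X := fun hwX => by rw [Set.insert_eq_of_mem hwX] at hk; omega
    refine ⟨hwX, ?_⟩
    rw [Set.ncard_insert_of_notMem hwX] at hk ⊢
    omega
  obtain ⟨hu, hku⟩ := hins u (.inl rfl)
  obtain ⟨hv, hkv⟩ := hins v (.inr rfl)
  obtain ⟨PA, hPA, hPAk⟩ := ih' A (insert u X) k fun Y hY =>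
    h Y (hX.of_isSeparator_insert_left hR hY)
  obtain ⟨PB, hPB, hPBk⟩ := ih' (insert v X) B k fun Y hY =>
    h Y (hX.of_isSeparator_insert_right hR hY)
  rw [← hku]
  exact exists_disjointPaths_of_split hR' huv hne hu hv hX hPA (hku.trans hPAk.symm).le
    hPB (hkv.trans hPBk.symm).le

section Counting

lemma Set.ncard_image_inl_union_image_inr {α β : Type*} [Finite α] [Finite β] (s : Set α)
    (t : Set β) : (Sum.inl '' s ∪ Sum.inr '' t).ncard = s.ncard + t.ncard := by
  rw [Set.ncard_union_eq Set.disjoint_image_inl_image_inr,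
    Set.ncard_image_of_injective _ Sum.inl_injective,
    Set.ncard_image_of_injective _ Sum.inr_injective]

lemma Set.ncard_setOf_snd_mem {ι V : Type*} [Fintype ι] [Finite V] (X : ι → Set V) :
    {p : ι × V | p.2 ∈ X p.1}.ncard = ∑ i, (X i).ncard := by
  classical
  have := Fintype.ofFinite V
  simp only [Set.ncard_eq_toFinset_card', Set.toFinset_ofPred, Finset.card_filter,
    Fintype.sum_prod_type]
  refine Finset.sum_congr rfl fun i _ => ?_
  rw [← Finset.card_filter]
  congr 1
  ext
  simp

end Counting

section DPaths

variable {ι V : Type*}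

theorem DPathSys.card_le [Finite V] {ℓ : ℕ} {G : Fin ℓ → V → V → Prop} {S : Fin ℓ → Set V}
    {B : Set V} {P : Finset (Fin ℓ × List V)} (hP : DPathSys G S B P) {B' : Set V}
    {X : Fin ℓ → Set V} (hX : ∀ i, IsSeparator (G i) (S i) B' (X i)) :
    P.card ≤ (B \ B').ncard + ∑ i, (X i).ncard := by
  classical
  set T : Set ((Fin ℓ × V) ⊕ V) := Sum.inl '' {p | p.2 ∈ X p.1} ∪ Sum.inr '' (B \ B')
  -- a path is charged to its last vertex if that avoids `B'`, else to a vertex of `X` on it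
  let charge (q : Fin ℓ × List V) : (Fin ℓ × V) ⊕ V → Prop :=
    Sum.elim (fun x => x.1 = q.1 ∧ x.2 ∈ q.2) (fun b => q.2.getLast? = some b)
  calc P.card ≤ T.toFinite.toFinset.card := by
        refine Finset.card_le_card_of_forall_subsingleton charge (fun q hq => ?_) ?_
        · obtain ⟨b, hbB, hqb⟩ := hP.2.1 q hq
          by_cases hbB' : b ∈ B'
          · obtain ⟨x, hx, hxX⟩ := hX q.1 q.2 (hP.1.1 q hq).1 (hP.1.1 q hq).2 ⟨b, hbB', hqb⟩
            exact ⟨.inl (q.1, x), by simp [T, hxX], rfl, hx⟩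
          · exact ⟨.inr b, by simp [T, hbB, hbB'], hqb⟩
        · rintro (⟨i, x⟩ | b) - q ⟨hq, hqw⟩ q' ⟨hq', hq'w⟩ <;> by_contra hne
          · exact hP.1.2 q hq q' hq' hne (hqw.1.symm.trans hq'w.1) x hqw.2 hq'w.2
          · exact hP.2.2 q hq q' hq' hne (hqw.trans hq'w.symm)
    _ = (B \ B').ncard + ∑ i, (X i).ncard := by
        rw [← Set.ncard_eq_toFinset_card, Set.ncard_image_inl_union_image_inr,
          Set.ncard_setOf_snd_mem, add_comm]

def dpathDigraph (G : ι → V → V → Prop) (B : Set V) : (ι × V) ⊕ V → (ι × V) ⊕ V → Prop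
  | .inl (i, a), .inl (j, b) => i = j ∧ G i a b
  | .inl (_, a), .inr b => a = b ∧ b ∈ B
  | .inr _, _ => False

def liftPath (q : ι × List V) : List ((ι × V) ⊕ V) :=
  q.2.map (fun a => .inl (q.1, a)) ++ (q.2.getLast?.map .inr).toList

lemma liftPath_eq_of_getLast?_eq {q : ι × List V} {b : V} (hb : q.2.getLast? = some b) :
    liftPath q = q.2.map (fun a => .inl (q.1, a)) ++ [.inr b] := by
  simp [liftPath, hb]

lemma mem_liftPath_inl {q : ι × List V} {i : ι} {x : V} :
    .inl (i, x) ∈ liftPath q ↔ i = q.1 ∧ x ∈ q.2 := by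
  simp [liftPath, and_comm, eq_comm]

lemma mem_liftPath_inr {q : ι × List V} {b : V} :
    .inr b ∈ liftPath q ↔ q.2.getLast? = some b := by
  simp [liftPath]

lemma liftPath_injOn : Set.InjOn (liftPath (ι := ι) (V := V)) {q | q.2 ≠ []} := by
  rintro ⟨i, p⟩ hp ⟨j, p'⟩ hp' h
  obtain ⟨b, hb⟩ := Option.ne_none_iff_exists'.1 (mt List.getLast?_eq_none_iff.1 hp)
  obtain ⟨b', hb'⟩ := Option.ne_none_iff_exists'.1 (mt List.getLast?_eq_none_iff.1 hp')
  rw [liftPath_eq_of_getLast?_eq hb, liftPath_eq_of_getLast?_eq hb'] at h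
  have hmap := (List.append_inj' h rfl).1
  obtain ⟨a, t, rfl⟩ := List.exists_cons_of_ne_nil hp
  obtain ⟨a', t', rfl⟩ := List.exists_cons_of_ne_nil hp'
  simp only [List.map_cons, List.cons.injEq, Sum.inl.injEq, Prod.mk.injEq] at hmap
  obtain ⟨⟨rfl, rfl⟩, ht⟩ := hmap
  simp [(List.map_injective_iff.2 fun x y h => by simpa using h) ht]

variable {G : ι → V → V → Prop} {B : Set V}

lemma isPathList_liftPath {q : ι × List V} (hq : IsPathList (G q.1) q.2) (hB : LastIn q.2 B) :
    IsPathList (dpathDigraph G B) (liftPath q) := by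
  obtain ⟨b, hb, hqb⟩ := hB
  rw [liftPath_eq_of_getLast?_eq hqb]
  refine ⟨by simp, ?_, ?_⟩
  · refine (hq.2.1.map fun x y h => by simpa using h).append (List.nodup_singleton _) ?_
    simp
  · refine List.isChain_append.2 ⟨List.isChain_map _ |>.2 (hq.2.2.imp fun _ _ h => ⟨rfl, h⟩),
      .singleton _, ?_⟩
    simp only [List.getLast?_map, hqb, Option.map_some, Option.mem_def, Option.some.injEq,
      List.head?_cons]
    rintro _ rfl _ rfl
    exact ⟨rfl, hb⟩

lemma exists_eq_liftPath {i : ι} {b : V} :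
    ∀ {l : List ((ι × V) ⊕ V)} {a : V}, l.IsChain (dpathDigraph G B) →
      l.head? = some (.inl (i, a)) → l.getLast? = some (.inr b) →
      ∃ p, l = liftPath (i, p) ∧ p.IsChain (G i) ∧ p.head? = some a ∧ p.getLast? = some b ∧
        b ∈ B
  | [_], _, _, rfl, hl => by simp at hl
  | _ :: .inl (j, y) :: t, a, hc, rfl, hl => by
    obtain ⟨⟨rfl, hay⟩, hc⟩ := List.isChain_cons_cons.1 hc
    obtain ⟨p, hlp, hp, hpy, hpb, hb⟩ :=
      exists_eq_liftPath hc rfl (by simpa [List.getLast?_cons_cons] using hl)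
    obtain ⟨t', rfl⟩ : ∃ t', p = y :: t' := ⟨p.tail, List.eq_cons_of_mem_head? hpy⟩
    refine ⟨a :: y :: t', ?_, .cons_cons hay hp, rfl, by simpa using hpb, hb⟩
    rw [liftPath_eq_of_getLast?_eq (by simpa using hpb)] at hlp ⊢
    simp [hlp]
  | _ :: .inr c :: t, a, hc, rfl, hl => by
    obtain ⟨⟨rfl, hcB⟩, hc⟩ := List.isChain_cons_cons.1 hc
    match t, hc with
    | [], _ =>
      obtain rfl : a = b := by simpa using hl
      exact ⟨[a], by simp [liftPath], .singleton _, rfl, rfl, hcB⟩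
    | _ :: _, hc => exact (List.isChain_cons_cons.1 hc).1.elim

end DPaths

section AuxiliaryDigraph

variable {V : Type*} {ℓ : ℕ} {G : Fin ℓ → V → V → Prop} {S : Fin ℓ → Set V}
  {B : Set V}

lemma IsSeparator.exists_dCut_le [Finite V] {Y : Set ((Fin ℓ × V) ⊕ V)}
    (hY : IsSeparator (dpathDigraph G B) (Sum.inl '' {p | p.2 ∈ S p.1}) (Sum.inr '' B) Y) :
    ∃ B' ⊆ B, ∃ X : Fin ℓ → Set V, (∀ i, IsSeparator (G i) (S i) B' (X i)) ∧
      (B \ B').ncard + ∑ i, (X i).ncard ≤ Y.ncard := by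
  refine ⟨{b ∈ B | .inr b ∉ Y}, Set.sep_subset _ _, fun i => {x | .inl (i, x) ∈ Y},
    fun i p hp ⟨a, ha, hpa⟩ ⟨b, ⟨hbB, hbY⟩, hpb⟩ => ?_, ?_⟩
  · obtain ⟨w, hw, hwY⟩ := hY (liftPath (i, p)) (isPathList_liftPath hp ⟨b, hbB, hpb⟩)
      ⟨.inl (i, a), ⟨(i, a), ha, rfl⟩, by simp [liftPath, hpa]⟩
      ⟨.inr b, ⟨b, hbB, rfl⟩, by simp [liftPath_eq_of_getLast?_eq (q := (i, p)) hpb]⟩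
    rcases w with ⟨j, x⟩ | c
    · obtain ⟨rfl, hx⟩ := mem_liftPath_inl.1 hw
      exact ⟨x, hx, hwY⟩
    · obtain rfl : c = b := Option.some.inj ((mem_liftPath_inr.1 hw).symm.trans hpb)
      exact absurd hwY hbY
  · rw [add_comm, ← Set.ncard_setOf_snd_mem, ← Set.ncard_image_inl_union_image_inr]
    refine Set.ncard_le_ncard ?_
    rintro _ (⟨x, hx, rfl⟩ | ⟨b, hb, rfl⟩)
    · exact hx
    · exact not_not.1 fun hbY => hb.2 ⟨hb.1, hbY⟩

lemma DisjointPaths.exists_dPathSys {Ph : Finset (List ((Fin ℓ × V) ⊕ V))}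
    (hPh : DisjointPaths (dpathDigraph G B) (Sum.inl '' {p | p.2 ∈ S p.1}) (Sum.inr '' B) Ph) :
    ∃ P, DPathSys G S B P ∧ P.card = Ph.card := by
  classical
  have hsub : (Ph : Set _) ⊆ liftPath ''
      {q | IsPathList (G q.1) q.2 ∧ FirstIn q.2 (S q.1) ∧ LastIn q.2 B} := by
    intro l hl
    obtain ⟨hl, ⟨_, ⟨⟨i, a⟩, ha, rfl⟩, hla⟩, ⟨_, ⟨b, -, rfl⟩, hlb⟩⟩ := hPh.1 l hl
    obtain ⟨p, rfl, hc, hpa, hpb, hb⟩ := exists_eq_liftPath hl.2.2 hla hlb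
    have hnd := hl.2.1
    rw [liftPath_eq_of_getLast?_eq (q := (i, p)) hpb] at hnd
    refine ⟨(i, p), ⟨⟨?_, ?_, hc⟩, ⟨a, ha, hpa⟩, ⟨b, hb, hpb⟩⟩, rfl⟩
    · rintro rfl
      simp at hpa
    · exact (List.nodup_append.1 hnd).1.of_map _
  obtain ⟨P, hPQ, rfl⟩ := Finset.subset_set_image_iff.1 hsub
  have hinj : Set.InjOn liftPath (P : Set (Fin ℓ × List V)) :=
    liftPath_injOn.mono fun q hq => (hPQ hq).1.1
  have hdisj : ∀ q ∈ P, ∀ q' ∈ P, q ≠ q' → ListsDisjoint (liftPath q) (liftPath q') :=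
    fun q hq q' hq' hne => hPh.2 (Finset.mem_image_of_mem _ hq) (Finset.mem_image_of_mem _ hq')
      (hinj.ne hq hq' hne)
  refine ⟨P, ⟨⟨fun q hq => ⟨(hPQ hq).1, (hPQ hq).2.1⟩, ?_⟩, fun q hq => (hPQ hq).2.2, ?_⟩, ?_⟩
  · intro q hq q' hq' hne hi x hx hx'
    exact hdisj q hq q' hq' hne (.inl (q.1, x)) (mem_liftPath_inl.2 ⟨rfl, hx⟩)
      (mem_liftPath_inl.2 ⟨hi, hx'⟩)
  · intro q hq q' hq' hne hlast
    obtain ⟨b, -, hb⟩ := (hPQ hq).2.2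
    exact hdisj q hq q' hq' hne (.inr b) (mem_liftPath_inr.2 hb)
      (mem_liftPath_inr.2 (hlast ▸ hb))
  · rw [Finset.card_image_of_injOn hinj]

end AuxiliaryDigraph

/-- Min-max duality for D-paths and D-cuts: the maximum size of a set of
D-paths w.r.t. `(ℱ,𝒮)` and `B` equals the minimum order of a D-cut, i.e.
`min over B' ⊆ B of (|B \ B'| + Σ_i x_i(B'))`, where `x_i(B')` is the minimum
size of an `(S_i, B')`-separator in `G_i`. -/
theorem dpaths_min_max {V : Type*} [Fintype V] {ℓ : ℕ}
    (G : Fin ℓ → V → V → Prop) (S : Fin ℓ → Set V) (B : Set V) :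
    sSup {n : ℕ | ∃ P : Finset (Fin ℓ × List V), DPathSys G S B P ∧ P.card = n} =
    sInf {n : ℕ | ∃ B' ⊆ B, ∃ X : Fin ℓ → Set V,
      (∀ i, IsSeparator (G i) (S i) B' (X i)) ∧
      n = (B \ B').ncard + ∑ i : Fin ℓ, (X i).ncard} := by
  set cutOrders := {n : ℕ | ∃ B' ⊆ B, ∃ X : Fin ℓ → Set V,
      (∀ i, IsSeparator (G i) (S i) B' (X i)) ∧ n = (B \ B').ncard + ∑ i, (X i).ncard}
  set m := sInf cutOrders
  obtain ⟨B₀, -, X₀, hX₀, hm⟩ : m ∈ cutOrders := Nat.sInf_mem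
    ⟨_, ∅, Set.empty_subset B, fun _ => ∅, fun _ _ _ _ ⟨_, hb, _⟩ => hb.elim, rfl⟩
  have hle : ∀ n ∈ {n | ∃ P, DPathSys G S B P ∧ P.card = n}, n ≤ m := by
    rintro _ ⟨P, hP, rfl⟩
    exact hm ▸ hP.card_le hX₀
  obtain ⟨Ph, hPh, hPhm⟩ := exists_disjointPaths_of_le_ncard (dpathDigraph G B)
      (Sum.inl '' {p | p.2 ∈ S p.1}) (Sum.inr '' B) m fun Y hY => by
    obtain ⟨B', hB', X, hX, hXY⟩ := hY.exists_dCut_le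
    exact (Nat.sInf_le (s := cutOrders) ⟨B', hB', X, hX, rfl⟩).trans hXY
  obtain ⟨P, hP, hPm⟩ := hPh.exists_dPathSys
  exact le_antisymm (csSup_le ⟨P.card, P, hP, rfl⟩ hle)
    (le_csSup ⟨m, hle⟩ ⟨P, hP, hPm.trans hPhm⟩)
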